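/- Let (X,B,μ) be a measure space and q a lower bounded quadratic form on L²(X,μ) satisfying the first Beurling–Deny criterion, with lower bound −λ. Fix μ' ≥ λ and set ‖f‖_q² = q(f) + μ'‖f‖²_{L²}. If f, g ∈ D(q) are real-valued, then f ∧ g := min{f,g} ∈ D(q) and ‖f ∧ g‖_q² ≤ ‖f‖_q² + ‖g‖_q². -/

import Mathlib

open MeasureTheory
open scoped ComplexInnerProductSpace

noncomputable section

/-- A (densely defined) quadratic form on a complex Hilbert space `H`: a dense domain
`dom` and a map `Q` which, on the domain, is absolutely homogeneous of degree two and
satisfies the parallelogram identity. (The values of `Q` outside of `dom` are irrelevant.) -/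
structure QForm (H : Type*) [NormedAddCommGroup H] [InnerProductSpace ℂ H] where
  dom : Submodule ℂ H
  dense_dom : Dense (dom : Set H)
  Q : H → ℝ
  smul_eq : ∀ (a : ℂ), ∀ f ∈ dom, Q (a • f) = ‖a‖ ^ 2 * Q f
  parallelogram : ∀ f ∈ dom, ∀ g ∈ dom, Q (f + g) + Q (f - g) = 2 * Q f + 2 * Q g

/-- The squared form norm `‖f‖_q² = q(f) + μ'·‖f‖²` of a quadratic form, for a shift `μ'`. -/
def QForm.normSq {H : Type*} [NormedAddCommGroup H] [InnerProductSpace ℂ H]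
    (q : QForm H) (μ' : ℝ) (f : H) : ℝ :=
  q.Q f + μ' * ‖f‖ ^ 2

/-- A quadratic form on `L²(X,μ)` is real if the domain is conjugation invariant and
`q(conj f) = q(f)`. -/
def QForm.IsReal {X : Type*} [MeasurableSpace X] {μ : Measure X}
    (q : QForm (Lp ℂ 2 μ)) : Prop :=
  ∀ f ∈ q.dom, ∃ g ∈ q.dom,
    (∀ᵐ x ∂μ, g x = (starRingEnd ℂ) (f x)) ∧ q.Q g = q.Q f

/-- The first Beurling–Deny criterion for a quadratic form on `L²(X,μ)`: the form is real,
and `f ∈ D(q)` implies `|f| ∈ D(q)` with `q(|f|) ≤ q(f)`. -/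
def QForm.BeurlingDeny {X : Type*} [MeasurableSpace X] {μ : Measure X}
    (q : QForm (Lp ℂ 2 μ)) : Prop :=
  q.IsReal ∧ ∀ f ∈ q.dom, ∃ g ∈ q.dom,
    (∀ᵐ x ∂μ, g x = (‖f x‖ : ℂ)) ∧ q.Q g ≤ q.Q f

end

/-!
Write `f ∧ g = ½(f + g - |f - g|)` and `f ∨ g = ½(f + g + |f - g|)`. The form norm `‖·‖_q²`
satisfies the parallelogram identity, and `f ∧ g ± f ∨ g` are `f + g` and `-|f - g|`, so
`‖f ∧ g‖_q² + ‖f ∨ g‖_q² = ½(‖f + g‖_q² + ‖|f - g|‖_q²)`. The Beurling–Deny criterion gives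
`‖|f - g|‖_q² ≤ ‖f - g‖_q²`, and the parallelogram identity for `f, g` turns the right-hand side
into at most `‖f‖_q² + ‖g‖_q²`. Finally `‖f ∨ g‖_q² ≥ 0` because `μ' ≥ λ`.
-/

namespace QForm

variable {H : Type*} [NormedAddCommGroup H] [InnerProductSpace ℂ H] (q : QForm H) (μ' : ℝ)

theorem Q_neg {f : H} (hf : f ∈ q.dom) : q.Q (-f) = q.Q f := by
  simpa using q.smul_eq (-1) f hf

theorem normSq_neg {f : H} (hf : f ∈ q.dom) : q.normSq μ' (-f) = q.normSq μ' f := by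
  simp only [normSq, q.Q_neg hf, norm_neg]

theorem normSq_parallelogram {f g : H} (hf : f ∈ q.dom) (hg : g ∈ q.dom) :
    q.normSq μ' (f + g) + q.normSq μ' (f - g) = 2 * q.normSq μ' f + 2 * q.normSq μ' g := by
  have hQ := q.parallelogram f hf g hg
  have hnorm := parallelogram_law_with_norm ℂ f g
  simp only [normSq]
  linear_combination hQ + μ' * hnorm

theorem normSq_nonneg {lam : ℝ} (hlb : ∀ f ∈ q.dom, -lam * ‖f‖ ^ 2 ≤ q.Q f) (hμ' : lam ≤ μ')
    {f : H} (hf : f ∈ q.dom) : 0 ≤ q.normSq μ' f := by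
  have := hlb f hf
  unfold normSq
  nlinarith [sq_nonneg ‖f‖]

theorem normSq_half_sub_add_half_add_le {f g a : H} (hf : f ∈ q.dom) (hg : g ∈ q.dom)
    (ha : a ∈ q.dom) (hle : q.normSq μ' a ≤ q.normSq μ' (f - g)) :
    q.normSq μ' ((2 : ℂ)⁻¹ • (f + g - a)) + q.normSq μ' ((2 : ℂ)⁻¹ • (f + g + a))
      ≤ q.normSq μ' f + q.normSq μ' g := by
  have hs : f + g ∈ q.dom := q.dom.add_mem hf hg
  have hpar := q.normSq_parallelogram μ' (q.dom.smul_mem (2 : ℂ)⁻¹ (q.dom.sub_mem hs ha))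
    (q.dom.smul_mem (2 : ℂ)⁻¹ (q.dom.add_mem hs ha))
  have hsum : (2 : ℂ)⁻¹ • (f + g - a) + (2 : ℂ)⁻¹ • (f + g + a) = f + g := by module
  have hdiff : (2 : ℂ)⁻¹ • (f + g - a) - (2 : ℂ)⁻¹ • (f + g + a) = -a := by module
  rw [hsum, hdiff, q.normSq_neg μ' ha] at hpar
  linarith [q.normSq_parallelogram μ' hf hg]

end QForm

theorem Complex.inv_two_mul_add_sub_abs (x y : ℝ) :
    (2 : ℂ)⁻¹ * ((x : ℂ) + y - ((|x - y| : ℝ) : ℂ)) = ((min x y : ℝ) : ℂ) := by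
  rw [← max_sub_min_eq_abs', ← Complex.ofReal_add, ← min_add_max x y]
  push_cast
  ring

namespace MeasureTheory.Lp

variable {X : Type*} [MeasurableSpace X] {μ : Measure X} {p : ENNReal}

theorem norm_eq_of_ae_eq_norm {E F : Type*} [NormedAddCommGroup E] [NormedAddCommGroup F]
    {f : Lp E p μ} {g : Lp F p μ} (h : ∀ᵐ x ∂μ, ‖f x‖ = ‖g x‖) : ‖f‖ = ‖g‖ :=
  le_antisymm (norm_le_norm_of_ae_le (h.mono fun _ hx => hx.le))
    (norm_le_norm_of_ae_le (h.mono fun _ hx => hx.ge))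

theorem ae_inv_two_smul_add_sub_eq_min {f g a : Lp ℂ p μ}
    (hf : ∀ᵐ x ∂μ, (f x).im = 0) (hg : ∀ᵐ x ∂μ, (g x).im = 0)
    (ha : ∀ᵐ x ∂μ, a x = (‖(f - g) x‖ : ℂ)) :
    ∀ᵐ x ∂μ, ((2 : ℂ)⁻¹ • (f + g - a)) x = ((min (f x).re (g x).re : ℝ) : ℂ) := by
  filter_upwards [coeFn_smul (2 : ℂ)⁻¹ (f + g - a), coeFn_sub (f + g) a, coeFn_add f g,
    coeFn_sub f g, ha, hf, hg] with x hsmul hsub hadd hsub' hax hfx hgx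
  have hf_re : f x = ((f x).re : ℂ) := Complex.ext rfl (by simpa using hfx)
  have hg_re : g x = ((g x).re : ℂ) := Complex.ext rfl (by simpa using hgx)
  have habs : a x = ((|(f x).re - (g x).re| : ℝ) : ℂ) := by
    rw [hax, hsub', Pi.sub_apply, hf_re, hg_re, ← Complex.ofReal_sub, Complex.norm_real,
      Real.norm_eq_abs]
    simp
  rw [hsmul, Pi.smul_apply, hsub, Pi.sub_apply, hadd, Pi.add_apply, habs, smul_eq_mul, hf_re,
    hg_re]
  simpa using Complex.inv_two_mul_add_sub_abs (f x).re (g x).re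

end MeasureTheory.Lp

/-- Let `q` be a lower bounded quadratic form on `L²(X,μ)` with lower
bound `−λ` satisfying the first Beurling–Deny criterion, and let `μ' ≥ λ`. If
`f, g ∈ D(q)` are real-valued, then `f ∧ g = min{f,g} ∈ D(q)` and
`‖f ∧ g‖_q² ≤ ‖f‖_q² + ‖g‖_q²`, where `‖·‖_q² = q(·) + μ'·‖·‖²_{L²}`. -/
theorem stmt4 {X : Type*} [MeasurableSpace X] {μ : Measure X}
    (q : QForm (Lp ℂ 2 μ)) (lam mu' : ℝ)
    (hlb : ∀ f ∈ q.dom, -lam * ‖f‖ ^ 2 ≤ q.Q f) (hmu : lam ≤ mu')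
    (hBD : q.BeurlingDeny)
    (f g : Lp ℂ 2 μ) (hf : f ∈ q.dom) (hg : g ∈ q.dom)
    (hfr : ∀ᵐ x ∂μ, (f x).im = 0) (hgr : ∀ᵐ x ∂μ, (g x).im = 0) :
    ∃ h ∈ q.dom, (∀ᵐ x ∂μ, h x = ((min (f x).re (g x).re : ℝ) : ℂ)) ∧
      q.normSq mu' h ≤ q.normSq mu' f + q.normSq mu' g := by
  obtain ⟨a, ha, ha_abs, hQa⟩ := hBD.2 (f - g) (q.dom.sub_mem hf hg)
  have hs : f + g ∈ q.dom := q.dom.add_mem hf hg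
  refine ⟨(2 : ℂ)⁻¹ • (f + g - a), q.dom.smul_mem _ (q.dom.sub_mem hs ha),
    Lp.ae_inv_two_smul_add_sub_eq_min hfr hgr ha_abs, ?_⟩
  have hnorm : ‖a‖ = ‖f - g‖ :=
    Lp.norm_eq_of_ae_eq_norm (ha_abs.mono fun x hx => by simp [hx])
  have hle : q.normSq mu' a ≤ q.normSq mu' (f - g) := by
    simp only [QForm.normSq, hnorm]
    linarith
  have hmax := q.normSq_nonneg mu' hlb hmu (q.dom.smul_mem (2 : ℂ)⁻¹ (q.dom.add_mem hs ha))
  linarith [q.normSq_half_sub_add_half_add_le mu' hf hg ha hle]
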